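/- Let x, y, d, n be integers with n ≥ 2 and gcd(x,d) = 1, and suppose (x-d)^5 + x^5 + (x+d)^5 = y^n. Set κ = gcd(x,10) and T = d^2 + x^2. Then there exist integers a and b with gcd(κ·a, b) = 1 such that x = κ^(n-1) · a^n and 7 · κ^(4n-5) · a^(4n) + b^n = (10/κ) · T^2. -/

import Mathlib

/-!
Expanding, `(x - d)^5 + x^5 + (x + d)^5 = x * Q` with `Q = 3x^4 + 20x^2d^2 + 10d^4`. Modulo any
divisor of `x^2`, `Q` is congruent to `10 d^4`, so for coprime `x, d` the only common prime factors
of `x` and `Q` are the primes of `κ = gcd(x, 10)`, and each divides `Q` exactly once because `10`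
is squarefree. Hence `Q = κ V` with `x κ` and `V > 0` coprime, and `(x κ) V = y^n` makes both
factors `n`-th powers: `x κ = c^n` and `V = b^n`. As `κ` is squarefree, `κ ∣ c`, so `c = κ a` and
`x = κ^(n-1) a^n`. Dividing the identity `7 x^4 + Q = 10 (d^2 + x^2)^2` by `κ` gives the equation
for `a` and `b`.
-/

namespace Int

theorem eq_abs_pow_of_associated_pow {c m : ℤ} {n : ℕ} (h : Associated (c ^ n) m) (hm : 0 ≤ m) :
    m = |c| ^ n := by
  rw [associated_iff_natAbs, natAbs_pow] at h
  rw [← natCast_natAbs, ← natAbs_of_nonneg hm, ← h]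
  push_cast
  rfl

theorem exists_eq_pow_of_mul_eq_pow_of_pos {a b c : ℤ} {n : ℕ} (hab : IsCoprime a b)
    (h : a * b = c ^ n) (hb : 0 < b) : (∃ e, a = e ^ n) ∧ ∃ f, b = f ^ n := by
  rcases n.even_or_odd with hn | hn
  · have ha : 0 ≤ a := nonneg_of_mul_nonneg_left (h ▸ hn.pow_nonneg c) hb
    obtain ⟨e, he⟩ := exists_associated_pow_of_mul_eq_pow' hab h
    obtain ⟨f, hf⟩ := exists_associated_pow_of_mul_eq_pow' hab.symm ((mul_comm b a).trans h)
    exact ⟨⟨|e|, eq_abs_pow_of_associated_pow he ha⟩, ⟨|f|, eq_abs_pow_of_associated_pow hf hb.le⟩⟩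
  · exact eq_pow_of_mul_eq_pow_odd hab hn h

theorem squarefree_ten : Squarefree (10 : ℤ) :=
  squarefree_natCast.mpr (Nat.squarefree_mul_iff.mpr
    ⟨by norm_num, Nat.prime_two.squarefree, Nat.prime_five.squarefree⟩ : Squarefree (2 * 5))

end Int

def quartic (x d : ℤ) : ℤ := 3 * x ^ 4 + 20 * x ^ 2 * d ^ 2 + 10 * d ^ 4

theorem sum_fifth_powers_eq_mul_quartic (x d : ℤ) :
    (x - d) ^ 5 + x ^ 5 + (x + d) ^ 5 = x * quartic x d := by
  unfold quartic; ring

theorem seven_mul_pow_four_add_quartic (x d : ℤ) :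
    7 * x ^ 4 + quartic x d = 10 * (d ^ 2 + x ^ 2) ^ 2 := by
  unfold quartic; ring

theorem quartic_pos {x d : ℤ} (h : IsCoprime x d) : 0 < quartic x d := by
  have hxd : x ≠ 0 ∨ d ≠ 0 := by
    by_contra! h0
    obtain ⟨rfl, rfl⟩ := h0
    exact not_isCoprime_zero_zero h
  unfold quartic
  rcases hxd with hx | hd
  · have := pow_pos (sq_pos_of_ne_zero hx) 2
    positivity
  · have := pow_pos (sq_pos_of_ne_zero hd) 2
    positivity

theorem dvd_quartic_iff {x d k : ℤ} (h : IsCoprime x d) (hk : k ∣ x ^ 2) :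
    k ∣ quartic x d ↔ k ∣ 10 := by
  have hkd : IsCoprime k (d ^ 4) := ((h.pow_left (m := 2)).of_isCoprime_of_dvd_left hk).pow_right
  have hrest : k ∣ 3 * x ^ 4 + 20 * x ^ 2 * d ^ 2 :=
    hk.trans ⟨3 * x ^ 2 + 20 * d ^ 2, by ring⟩
  rw [quartic, dvd_add_right hrest]
  exact ⟨hkd.dvd_of_dvd_mul_right, fun h10 => h10.mul_right _⟩

theorem isCoprime_mul_gcd_ten {x d V : ℤ} (h : IsCoprime x d)
    (hV : quartic x d = Int.gcd x 10 * V) : IsCoprime (x * Int.gcd x 10) V := by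
  have hκx : (Int.gcd x 10 : ℤ) ∣ x := Int.gcd_dvd_left _ _
  refine isCoprime_of_prime_dvd (fun h0 => (quartic_pos h).ne' (by rw [hV, h0.2, mul_zero]))
    fun p hp hpxκ hpV => hp.not_isUnit (Int.squarefree_ten p ?_)
  have hpx : p ∣ x := (hp.dvd_or_dvd hpxκ).elim id (·.trans hκx)
  have hpκ : p ∣ Int.gcd x 10 :=
    Int.dvd_coe_gcd hpx ((dvd_quartic_iff h (dvd_pow hpx two_ne_zero)).mp (hV ▸ hpV.mul_left _))
  -- `p ∣ κ` and `p ∣ V` put `p^2` into `Q`, which modulo `x^2` is `10 d^4`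
  rw [← sq, ← dvd_quartic_iff h (pow_dvd_pow_of_dvd hpx 2), sq, hV]
  exact mul_dvd_mul hpκ hpV

theorem stmt_7 (x y d : ℤ) (n : ℕ) (hn : 2 ≤ n) (hgcd : Int.gcd x d = 1)
    (heq : (x - d) ^ 5 + x ^ 5 + (x + d) ^ 5 = y ^ n) :
    ∃ a b : ℤ, Int.gcd ((Int.gcd x 10 : ℤ) * a) b = 1 ∧
      x = (Int.gcd x 10 : ℤ) ^ (n - 1) * a ^ n ∧
      7 * (Int.gcd x 10 : ℤ) ^ (4 * n - 5) * a ^ (4 * n) + b ^ n =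
        (10 / (Int.gcd x 10 : ℤ)) * (d ^ 2 + x ^ 2) ^ 2 := by
  have hxd : IsCoprime x d := Int.isCoprime_iff_gcd_eq_one.mpr hgcd
  set κ : ℤ := (Int.gcd x 10 : ℤ)
  have hκ10 : κ ∣ 10 := Int.gcd_dvd_right _ _
  have hκpos : 0 < κ := Int.natCast_pos.mpr (Int.gcd_pos_of_ne_zero_right x (by norm_num))
  obtain ⟨V, hV⟩ := (dvd_quartic_iff hxd (dvd_pow (Int.gcd_dvd_left _ _) two_ne_zero)).mpr hκ10
  have hVpos : 0 < V := pos_of_mul_pos_right (hV ▸ quartic_pos hxd) hκpos.le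
  have hprod : x * κ * V = y ^ n := by rw [← heq, sum_fifth_powers_eq_mul_quartic, hV]; ring
  obtain ⟨⟨c, hc⟩, b, hb⟩ :=
    Int.exists_eq_pow_of_mul_eq_pow_of_pos (isCoprime_mul_gcd_ten hxd hV) hprod hVpos
  have hcop : IsCoprime (c ^ n) (b ^ n) := hc ▸ hb ▸ isCoprime_mul_gcd_ten hxd hV
  obtain ⟨m, rfl⟩ : ∃ m, n = m + 2 := ⟨n - 2, by omega⟩
  obtain ⟨a, rfl⟩ : κ ∣ c := ((Int.squarefree_ten.squarefree_of_dvd hκ10).dvd_pow_iff_dvd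
    (by omega)).mp (hc ▸ dvd_mul_left κ x)
  have hx : x = κ ^ (m + 1) * a ^ (m + 2) :=
    mul_right_cancel₀ hκpos.ne' (by rw [hc]; ring)
  refine ⟨a, b, Int.isCoprime_iff_gcd_eq_one.mp ?_, hx, mul_left_cancel₀ hκpos.ne' ?_⟩
  · exact (IsCoprime.pow_left_iff (by omega)).mp ((IsCoprime.pow_right_iff (by omega)).mp hcop)
  · rw [show 4 * (m + 2) - 5 = 4 * m + 3 by omega]
    linear_combination seven_mul_pow_four_add_quartic x d - hV - κ * hb - 7 * congrArg (· ^ 4) hx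
      - (d ^ 2 + x ^ 2) ^ 2 * Int.mul_ediv_cancel' hκ10
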